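/- The logical σ_X distance of the 3-torus code (qubits on edges) in the direction-0 sector equals N: the minimum cardinality of a 1-cycle S of the N×N×N 3-torus lattice with |S ∩ P_0| odd is exactly N; in particular every such homologically nontrivial cycle has at least N edges, and the straight loop L = {((t,0,0),0) : t ∈ ZMod N} attains this minimum. -/
import Mathlib


/-- The standard basis vector `eᵢ` of `(ZMod N)³` (vertices indexed by `Fin 3 → ZMod N`). -/
def basis3 (N : ℕ) (i : Fin 3) : Fin 3 → ZMod N := fun j => if j = i then 1 else 0

/-- The star of a vertex `v` of the `N × N × N` 3-torus lattice: the six edges incident to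
`v`, namely `(v, i)` and `(v - eᵢ, i)` for `i ∈ Fin 3`. -/
def star3 (N : ℕ) (v : Fin 3 → ZMod N) : Set ((Fin 3 → ZMod N) × Fin 3) :=
  {e | ∃ i : Fin 3, e = (v, i) ∨ e = (v - basis3 N i, i)}

/-- The boundary of a face `(v, k)` of the 3-torus lattice: the four edges
`(v, i)`, `(v, j)`, `(v + e_j, i)`, `(v + e_i, j)` where `{i, j} = {0,1,2} \ {k}`. -/
def faceBd3 (N : ℕ) (f : (Fin 3 → ZMod N) × Fin 3) : Set ((Fin 3 → ZMod N) × Fin 3) :=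
  {e | ∃ i : Fin 3, i ≠ f.2 ∧
      (e = (f.1, i) ∨ ∃ j : Fin 3, j ≠ f.2 ∧ j ≠ i ∧ e = (f.1 + basis3 N j, i))}

/-- `S` is a 1-cycle of the 3-torus lattice. -/
def isCycle3 (N : ℕ) (S : Set ((Fin 3 → ZMod N) × Fin 3)) : Prop :=
  ∀ v : Fin 3 → ZMod N, Even ((S ∩ star3 N v).ncard)

/-- `T` is a 1-cocycle of the 3-torus lattice. -/
def isCocycle3 (N : ℕ) (T : Set ((Fin 3 → ZMod N) × Fin 3)) : Prop :=
  ∀ f : (Fin 3 → ZMod N) × Fin 3, Even ((T ∩ faceBd3 N f).ncard)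

/-- The plane `P_x`: all direction-0 edges whose base point has first coordinate `x`;
a non-compressible 2-torus in the 3-torus. -/
def plane3 (N : ℕ) (x : ZMod N) : Set ((Fin 3 → ZMod N) × Fin 3) :=
  {e | ∃ y z : ZMod N, e = (![x, y, z], 0)}

/-- The straight loop `L = {((t,0,0), 0) : t ∈ ZMod N}`, a non-contractible loop. -/
def loop3 (N : ℕ) : Set ((Fin 3 → ZMod N) × Fin 3) :=
  {e | ∃ t : ZMod N, e = (![t, 0, 0], 0)}

/-- The coboundary of an edge `e`: all faces `f` with `e ∈ ∂f`. -/
def coface3 (N : ℕ) (e : (Fin 3 → ZMod N) × Fin 3) : Set ((Fin 3 → ZMod N) × Fin 3) :=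
  {f | e ∈ faceBd3 N f}

/-- The boundary of a cube `c`: the six faces `(c, k)` and `(c + e_k, k)` for `k ∈ Fin 3`. -/
def cubeBd3 (N : ℕ) (c : Fin 3 → ZMod N) : Set ((Fin 3 → ZMod N) × Fin 3) :=
  {f | ∃ k : Fin 3, f = (c, k) ∨ f = (c + basis3 N k, k)}

lemma mem_star3' {N : ℕ} {v : Fin 3 → ZMod N} {e : (Fin 3 → ZMod N) × Fin 3} :
    e ∈ star3 N v ↔ v = e.1 ∨ v = e.1 + basis3 N e.2 := by
  constructor
  · rintro ⟨i, h | h⟩ <;> rw [Prod.ext_iff] at h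
    · exact Or.inl h.1.symm
    · right; rw [h.2, h.1, sub_add_cancel]
  · rintro (h | h)
    · subst h; exact ⟨e.2, Or.inl rfl⟩
    · exact ⟨e.2, Or.inr (by rw [h]; simp)⟩

lemma mem_plane3' {N : ℕ} {x : ZMod N} {e : (Fin 3 → ZMod N) × Fin 3} :
    e ∈ plane3 N x ↔ e.1 0 = x ∧ e.2 = 0 := by
  constructor
  · rintro ⟨y, z, rfl⟩; simp
  · rintro ⟨h0, h2⟩
    refine ⟨e.1 1, e.1 2, ?_⟩
    rw [Prod.ext_iff]
    refine ⟨?_, h2⟩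
    funext j
    fin_cases j <;> simp [h0]

lemma mem_loop3' {N : ℕ} {e : (Fin 3 → ZMod N) × Fin 3} :
    e ∈ loop3 N ↔ e.1 1 = 0 ∧ e.1 2 = 0 ∧ e.2 = 0 := by
  constructor
  · rintro ⟨t, rfl⟩; simp
  · rintro ⟨h1, h2, h0⟩
    refine ⟨e.1 0, ?_⟩
    rw [Prod.ext_iff]
    refine ⟨?_, h0⟩
    funext j
    fin_cases j <;> simp [h1, h2]

lemma basis3_apply_self {N : ℕ} (i : Fin 3) : basis3 N i i = 1 := by simp [basis3]
lemma basis3_apply_ne {N : ℕ} {i j : Fin 3} (h : j ≠ i) : basis3 N i j = 0 := by simp [basis3, h]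

lemma basis3_ne_zero {N : ℕ} (hN : 2 ≤ N) (i : Fin 3) : basis3 N i ≠ 0 := by
  haveI : Fact (1 < N) := ⟨by omega⟩
  intro h
  have := congrFun h i
  simp [basis3] at this

lemma zmod2_cancel : ∀ a b : ZMod 2, a + b = 0 → b = a := by decide

lemma plane_parity_step {N : ℕ} (hN : 2 ≤ N) {S : Set ((Fin 3 → ZMod N) × Fin 3)}
    (hS : ∀ v : Fin 3 → ZMod N, Even ((S ∩ star3 N v).ncard)) (x : ZMod N) :
    ((S ∩ plane3 N x).ncard : ZMod 2) = ((S ∩ plane3 N (x+1)).ncard : ZMod 2) := by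
  classical
  haveI : NeZero N := ⟨by omega⟩
  set Sf : Finset ((Fin 3 → ZMod N) × Fin 3) := S.toFinset with hSfdef
  have hcard : ∀ T : Set ((Fin 3 → ZMod N) × Fin 3),
      (S ∩ T).ncard = (Sf.filter (fun e => e ∈ T)).card := by
    intro T
    rw [Set.ncard_eq_toFinset_card' (S ∩ T)]
    congr 1
    ext e
    simp [hSfdef]
  have hplane : ∀ c : ZMod N,
      ((S ∩ plane3 N c).ncard : ZMod 2)
        = ∑ e ∈ Sf, (if e ∈ plane3 N c then (1 : ZMod 2) else 0) := by
    intro c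
    rw [hcard, Finset.card_filter]
    push_cast
    rfl
  set A : Finset (Fin 3 → ZMod N) := Finset.univ.filter (fun v => v 0 = x + 1) with hA
  have hstar : ∀ v, ((S ∩ star3 N v).ncard : ZMod 2)
      = ∑ e ∈ Sf, (if e ∈ star3 N v then (1 : ZMod 2) else 0) := by
    intro v
    rw [hcard, Finset.card_filter]
    push_cast
    rfl
  have h0 : (∑ v ∈ A, ∑ e ∈ Sf, (if e ∈ star3 N v then (1 : ZMod 2) else 0)) = 0 := by
    refine Finset.sum_eq_zero fun v _ => ?_
    rw [← hstar]
    obtain ⟨k, hk⟩ := hS v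
    rw [hk, Nat.cast_add, CharTwo.add_self_eq_zero]
  rw [Finset.sum_comm] at h0
  have hbne : ∀ e : (Fin 3 → ZMod N) × Fin 3, e.1 ≠ e.1 + basis3 N e.2 := by
    intro e h
    exact basis3_ne_zero hN e.2 (by rwa [eq_comm, add_eq_left] at h)
  have hinner : ∀ e ∈ Sf, (∑ v ∈ A, (if e ∈ star3 N v then (1 : ZMod 2) else 0))
      = (if e ∈ plane3 N (x+1) then (1 : ZMod 2) else 0)
        + (if e ∈ plane3 N x then (1 : ZMod 2) else 0) := by
    intro e _
    have hsplit : (∑ v ∈ A, (if e ∈ star3 N v then (1 : ZMod 2) else 0))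
        = (if e.1 ∈ A then (1 : ZMod 2) else 0)
          + (if e.1 + basis3 N e.2 ∈ A then (1 : ZMod 2) else 0) := by
      have hpt : ∀ v, (if e ∈ star3 N v then (1 : ZMod 2) else 0)
          = (if v = e.1 then (1 : ZMod 2) else 0)
            + (if v = e.1 + basis3 N e.2 then (1 : ZMod 2) else 0) := by
        intro v
        by_cases h1 : v = e.1
        · subst h1
          simp [mem_star3', hbne e]
        · by_cases h2 : v = e.1 + basis3 N e.2
          · subst h2
            simp [mem_star3', h1]
          · simp [mem_star3', h1, h2]
      rw [Finset.sum_congr rfl fun v _ => hpt v, Finset.sum_add_distrib,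
        Finset.sum_ite_eq' A e.1 (fun _ => (1 : ZMod 2)),
        Finset.sum_ite_eq' A (e.1 + basis3 N e.2) (fun _ => (1 : ZMod 2))]
    rw [hsplit]
    by_cases h2 : e.2 = 0
    · have hb : (e.1 + basis3 N (0 : Fin 3)) 0 = e.1 0 + 1 := by
        simp [Pi.add_apply, basis3]
      simp only [hA, Finset.mem_filter, Finset.mem_univ, true_and, hb,
        add_left_inj, mem_plane3', h2, and_true]
    · have hb : (e.1 + basis3 N e.2) 0 = e.1 0 := by
        simp [Pi.add_apply, basis3_apply_ne (Ne.symm h2)]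
      simp only [hA, Finset.mem_filter, Finset.mem_univ, true_and, hb,
        mem_plane3', h2, and_false, if_false]
      split_ifs <;> decide
  rw [Finset.sum_congr rfl hinner, Finset.sum_add_distrib] at h0
  rw [hplane, hplane]
  exact zmod2_cancel _ _ h0

lemma plane_parity_all {N : ℕ} (hN : 2 ≤ N) {S : Set ((Fin 3 → ZMod N) × Fin 3)}
    (hS : ∀ v : Fin 3 → ZMod N, Even ((S ∩ star3 N v).ncard)) (x : ZMod N) :
    ((S ∩ plane3 N 0).ncard : ZMod 2) = ((S ∩ plane3 N x).ncard : ZMod 2) := by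
  haveI : NeZero N := ⟨by omega⟩
  have key : ∀ n : ℕ, ((S ∩ plane3 N 0).ncard : ZMod 2)
      = ((S ∩ plane3 N (n : ZMod N)).ncard : ZMod 2) := by
    intro n
    induction n with
    | zero => norm_num
    | succ m ih => rw [ih, plane_parity_step hN hS ((m : ZMod N))]; push_cast; ring_nf
  have hx : ((x.val : ℕ) : ZMod N) = x := by rw [ZMod.natCast_val, ZMod.cast_id]
  rw [← hx]
  exact key x.val

lemma cycle_lower_bound {N : ℕ} (hN : 2 ≤ N) {S : Set ((Fin 3 → ZMod N) × Fin 3)}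
    (hS : ∀ v : Fin 3 → ZMod N, Even ((S ∩ star3 N v).ncard))
    (hodd : Odd ((S ∩ plane3 N 0).ncard)) : N ≤ S.ncard := by
  haveI : NeZero N := ⟨by omega⟩
  have hoddx : ∀ x : ZMod N, Odd ((S ∩ plane3 N x).ncard) := by
    intro x
    have h := plane_parity_all hN hS x
    rw [ZMod.natCast_eq_natCast_iff'] at h
    rw [Nat.odd_iff] at hodd ⊢
    omega
  have hne : ∀ x : ZMod N, ∃ e, e ∈ S ∩ plane3 N x := by
    intro x
    exact Set.nonempty_of_ncard_ne_zero (by have := (hoddx x).pos; omega)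
  choose f hf using hne
  have hinj : Function.Injective f := by
    intro a b hab
    have ha := (mem_plane3'.1 (hf a).2).1
    have hb := (mem_plane3'.1 (hf b).2).1
    rw [← ha, ← hb, hab]
  calc N = Nat.card (ZMod N) := (Nat.card_zmod N).symm
    _ = (Set.univ : Set (ZMod N)).ncard := (Set.ncard_univ _).symm
    _ = (f '' Set.univ).ncard := (Set.ncard_image_of_injective _ hinj).symm
    _ ≤ S.ncard := Set.ncard_le_ncard (by rintro e ⟨x, -, rfl⟩; exact (hf x).1) (Set.toFinite S)

lemma loop3_cycle {N : ℕ} (hN : 2 ≤ N) (v : Fin 3 → ZMod N) :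
    Even ((loop3 N ∩ star3 N v).ncard) := by
  haveI : NeZero N := ⟨by omega⟩
  by_cases hv : v 1 = 0 ∧ v 2 = 0
  · have heq : loop3 N ∩ star3 N v
        = {((v, (0 : Fin 3)) : (Fin 3 → ZMod N) × Fin 3), (v - basis3 N 0, 0)} := by
      ext e
      simp only [Set.mem_inter_iff, mem_loop3', mem_star3', Set.mem_insert_iff,
        Set.mem_singleton_iff]
      constructor
      · rintro ⟨⟨h1, h2, h0⟩, hst | hst⟩
        · left; rw [Prod.ext_iff]; exact ⟨hst.symm, h0⟩
        · right; rw [Prod.ext_iff]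
          rw [h0] at hst
          exact ⟨by rw [hst]; simp, h0⟩
      · rintro (rfl | rfl) <;> simp_all [basis3, sub_eq_iff_eq_add]
    rw [heq, Set.ncard_pair]
    · exact Even.add_self 1
    · intro h
      rw [Prod.ext_iff] at h
      exact basis3_ne_zero hN 0 (by have := h.1; rwa [eq_comm, sub_eq_self] at this)
  · have heq : loop3 N ∩ star3 N v = ∅ := by
      ext e
      simp only [Set.mem_inter_iff, mem_loop3', mem_star3', Set.mem_empty_iff_false, iff_false]
      rintro ⟨⟨h1, h2, h0⟩, hst | hst⟩
      · exact hv ⟨hst ▸ h1, hst ▸ h2⟩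
      · rw [h0] at hst
        refine hv ⟨?_, ?_⟩ <;> rw [hst] <;> simp [basis3, h1, h2]
    rw [heq]
    simp

lemma loop3_inter_plane {N : ℕ} (hN : 2 ≤ N) :
    loop3 N ∩ plane3 N 0 = {((![0, 0, 0], (0 : Fin 3)) : (Fin 3 → ZMod N) × Fin 3)} := by
  ext e
  simp only [Set.mem_inter_iff, mem_loop3', mem_plane3', Set.mem_singleton_iff]
  constructor
  · rintro ⟨⟨h1, h2, h0⟩, h00, -⟩
    rw [Prod.ext_iff]
    refine ⟨?_, h0⟩
    funext j
    fin_cases j <;> simp [h00, h1, h2]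
  · rintro rfl
    simp

lemma loop3_ncard {N : ℕ} (hN : 2 ≤ N) : (loop3 N).ncard = N := by
  haveI : NeZero N := ⟨by omega⟩
  have heq : loop3 N
      = (fun t : ZMod N => ((![t, 0, 0], (0 : Fin 3)) : (Fin 3 → ZMod N) × Fin 3)) '' Set.univ := by
    ext e
    simp [loop3, eq_comm]
  rw [heq, Set.ncard_image_of_injective _ ?_, Set.ncard_univ, Nat.card_zmod]
  intro a b hab
  have := congrFun (congrArg Prod.fst hab) 0
  simpa using this

/-- The logical σ_X distance of the 3-torus code (qubits on edges) in the direction-0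
sector equals `N`: the least cardinality of a 1-cycle meeting `P 0` an odd number of
times is `N`, and the straight loop `L` attains this minimum. -/
theorem torus3_sigmaX_distance (N : ℕ) (hN : 2 ≤ N) :
    IsLeast {k : ℕ | ∃ S : Set ((Fin 3 → ZMod N) × Fin 3),
        isCycle3 N S ∧ Odd ((S ∩ plane3 N 0).ncard) ∧ S.ncard = k} N ∧
    isCycle3 N (loop3 N) ∧ Odd ((loop3 N ∩ plane3 N 0).ncard) ∧ (loop3 N).ncard = N := by
  have hodd : Odd ((loop3 N ∩ plane3 N 0).ncard) := by
    rw [loop3_inter_plane hN, Set.ncard_singleton]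
    exact odd_one
  refine ⟨⟨⟨loop3 N, loop3_cycle hN, hodd, loop3_ncard hN⟩, ?_⟩,
    loop3_cycle hN, hodd, loop3_ncard hN⟩
  rintro k ⟨S, hc, ho, rfl⟩
  exact cycle_lower_bound hN hc ho
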